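/- Let a : ℤ × ℤ → ℂ be square-summable (Σ_{k∈ℤ²} |a(k)|² < ∞) and let A be a bounded operator on ℓ²(ℕ × ℕ) whose matrix entries with respect to the canonical orthonormal basis (e_j)_{j ∈ ℕ×ℕ} satisfy ⟨A e_j, e_k⟩ = a(k − j) for all j, k ∈ ℕ × ℕ. For N ≥ 1 let P_N be the orthogonal projection onto span{e_j : j ∈ {0,...,N−1} × {0,...,N−1}}. Then φ(A, P_N) → 0 as N → ∞, and (P_N) is a proper Følner sequence for A. (In particular, every Toeplitz operator on the Hardy space H²(𝕋²) with symbol in L^∞(𝕋²) has a proper Følner sequence.) -/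

import Mathlib

noncomputable section

open Filter Topology TopologicalSpace

/-- The Hilbert–Schmidt norm of an operator, computed via a Hilbert basis of the space
(the value is independent of the choice of basis; for a finite-rank orthogonal
projection `P` it equals `√(rank P)`). -/
noncomputable def hsNorm {H : Type*} [NormedAddCommGroup H] [InnerProductSpace ℂ H]
    [CompleteSpace H] (A : H →L[ℂ] H) : ℝ :=
  Real.sqrt (∑' i : (exists_hilbertBasis ℂ H).choose, ‖A (i : H)‖ ^ 2)

variable {H : Type*} [NormedAddCommGroup H] [InnerProductSpace ℂ H] [CompleteSpace H]

/-- An orthogonal projection: a self-adjoint idempotent bounded operator. -/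
def IsOrthProjection (P : H →L[ℂ] H) : Prop :=
  IsIdempotentElem P ∧ IsSelfAdjoint P

/-- A nonzero finite-rank orthogonal projection. -/
def IsFinRankProj (P : H →L[ℂ] H) : Prop :=
  IsOrthProjection P ∧ P ≠ 0 ∧ FiniteDimensional ℂ (LinearMap.range (P : H →ₗ[ℂ] H))

/-- `φ(T,P) = ‖TP - PT‖₂ / ‖P‖₂`. -/
noncomputable def phi (T P : H →L[ℂ] H) : ℝ :=
  hsNorm (T * P - P * T) / hsNorm P

/-- A proper Følner sequence for `T`: an increasing sequence of nonzero finite-rank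
orthogonal projections converging strongly to the identity with `φ(T,P_n) → 0`. -/
def IsProperFolnerSeq (T : H →L[ℂ] H) (P : ℕ → H →L[ℂ] H) : Prop :=
  (∀ n, IsFinRankProj (P n)) ∧
  (∀ n, (P (n + 1) - P n).IsPositive) ∧
  (∀ x : H, Tendsto (fun n => P n x) atTop (nhds x)) ∧
  Tendsto (fun n => phi T (P n)) atTop (nhds 0)

/-- A strongly non-Følner operator: `φ(T,P) ≥ ε` for some `ε > 0` and every nonzero
finite-rank orthogonal projection `P`. -/
def StronglyNonFolner (T : H →L[ℂ] H) : Prop :=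
  ∃ ε > (0 : ℝ), ∀ P : H →L[ℂ] H, IsFinRankProj P → ε ≤ phi T P

/-- The numerical range of an operator. -/
def numRange (A : H →L[ℂ] H) : Set ℂ :=
  {z : ℂ | ∃ x : H, ‖x‖ = 1 ∧ (inner ℂ (A x) x : ℂ) = z}

/-- A finite operator in the sense of Williams: `0 ∈ closure W([T,X])` for every `X`. -/
def FiniteOperator (T : H →L[ℂ] H) : Prop :=
  ∀ X : H →L[ℂ] H, (0 : ℂ) ∈ closure (numRange (T * X - X * T))

/-- A finite block reducible operator: one having a nonzero finite-dimensional
reducing subspace. -/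
def FiniteBlockReducible (T : H →L[ℂ] H) : Prop :=
  ∃ H₀ : Submodule ℂ H, H₀ ≠ ⊥ ∧ FiniteDimensional ℂ H₀ ∧
    (∀ x ∈ H₀, T x ∈ H₀) ∧ (∀ x ∈ H₀ᗮ, T x ∈ H₀ᗮ)

/-- The canonical orthonormal basis vectors of `ℓ²(ℕ × ℕ)`. -/
noncomputable def eVec2 (j : ℕ × ℕ) : lp (fun _ : ℕ × ℕ => ℂ) 2 := lp.single 2 j 1

/-!
In the basis `(e_j)`, the commutator `[A, P_N]` has entries `(1_S(j) - 1_S(k)) a(k - j)`, where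
`S = {0,…,N}²`. Grouping the entries by `m = k - j`, `‖[A, P_N]‖₂²` is at most
`Σ_m |a(m)|² (c_N(m) + c_N(-m))`, where `c_N(m)` counts the `j ∈ S` with `j + m ∉ S`. This count
is at most `|S| = (N + 1)² = ‖P_N‖₂²` and at most `(N + 1)(|m₁| + |m₂|)`, so the weights
`(c_N(m) + c_N(-m)) / (N + 1)²` are bounded by `2` and tend to `0` for each `m`; dominated
convergence gives `φ(A, P_N)² → 0`. The other properties of a proper Følner sequence hold because
`P_N` is the coordinate projection onto the increasing squares `S`, which exhaust `ℕ × ℕ`.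
-/

open scoped ENNReal InnerProductSpace Finset lp

section HilbertBasis

variable {ι κ 𝕜 E : Type*} [RCLike 𝕜] [NormedAddCommGroup E] [InnerProductSpace 𝕜 E]

theorem lp.tsum_enorm_sq (f : lp (fun _ : ι => 𝕜) 2) : ∑' i, ‖f i‖ₑ ^ 2 = ‖f‖ₑ ^ 2 := by
  have h := lp.hasSum_norm (p := 2) (by norm_num) f
  simp only [ENNReal.toReal_ofNat, Real.rpow_two] at h
  simp_rw [← ofReal_norm, ← ENNReal.ofReal_pow (norm_nonneg _)]
  rw [← ENNReal.ofReal_tsum_of_nonneg (fun _ => by positivity) h.summable, h.tsum_eq]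

theorem HilbertBasis.tsum_enorm_inner_sq (b : HilbertBasis ι 𝕜 E) (x : E) :
    ∑' i, ‖⟪b i, x⟫_𝕜‖ₑ ^ 2 = ‖x‖ₑ ^ 2 := by
  simp_rw [← b.repr_apply_apply, lp.tsum_enorm_sq, LinearIsometryEquiv.enorm_map]

variable [CompleteSpace E]

theorem HilbertBasis.tsum_enorm_apply_sq_eq_adjoint (b : HilbertBasis ι 𝕜 E)
    (c : HilbertBasis κ 𝕜 E) (T : E →L[𝕜] E) :
    ∑' i, ‖T (b i)‖ₑ ^ 2 = ∑' j, ‖T.adjoint (c j)‖ₑ ^ 2 := by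
  calc ∑' i, ‖T (b i)‖ₑ ^ 2
      = ∑' i, ∑' j, ‖⟪c j, T (b i)⟫_𝕜‖ₑ ^ 2 := by simp_rw [c.tsum_enorm_inner_sq]
    _ = ∑' j, ∑' i, ‖⟪b i, T.adjoint (c j)⟫_𝕜‖ₑ ^ 2 := by
        rw [ENNReal.tsum_comm]
        simp_rw [ContinuousLinearMap.adjoint_inner_right, ← inner_conj_symm (T _),
          RCLike.enorm_conj]
    _ = ∑' j, ‖T.adjoint (c j)‖ₑ ^ 2 := by simp_rw [b.tsum_enorm_inner_sq]

theorem HilbertBasis.tsum_enorm_apply_sq_eq (b : HilbertBasis ι 𝕜 E) (c : HilbertBasis κ 𝕜 E)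
    (T : E →L[𝕜] E) : ∑' i, ‖T (b i)‖ₑ ^ 2 = ∑' j, ‖T (c j)‖ₑ ^ 2 := by
  rw [b.tsum_enorm_apply_sq_eq_adjoint c, c.tsum_enorm_apply_sq_eq_adjoint c,
    ContinuousLinearMap.adjoint_adjoint]

end HilbertBasis

section CoordinateProjection

variable {ι 𝕜 E : Type*} [DecidableEq ι] [RCLike 𝕜] [NormedAddCommGroup E] [InnerProductSpace 𝕜 E]

theorem HilbertBasis.apply_eq_sum_of_apply_eq_ite (b : HilbertBasis ι 𝕜 E) (s : Finset ι)
    {p : E →L[𝕜] E} (hpb : ∀ j, p (b j) = if j ∈ s then b j else 0) (x : E) :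
    p x = ∑ j ∈ s, b.repr x j • b j := by
  have h := (b.hasSum_repr x).mapL p
  simp only [map_smul, hpb, smul_ite, smul_zero] at h
  refine h.unique (hasSum_sum_of_ne_finset_zero fun j hj => if_neg hj) |>.trans ?_
  exact Finset.sum_congr rfl fun j hj => if_pos hj

theorem HilbertBasis.tendsto_apply_of_apply_eq_ite (b : HilbertBasis ι 𝕜 E) {s : ℕ → Finset ι}
    (hs : Tendsto s atTop atTop) {p : ℕ → E →L[𝕜] E}
    (hpb : ∀ n j, p n (b j) = if j ∈ s n then b j else 0) (x : E) :
    Tendsto (fun n => p n x) atTop (𝓝 x) := by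
  simp_rw [b.apply_eq_sum_of_apply_eq_ite _ (hpb _)]
  exact (b.hasSum_repr x).comp hs

theorem tsum_ite_and_eq_sum (s : Finset ι) (h : ι → ι → ℝ≥0∞) :
    ∑' j, ∑' k, (if j ∈ s ∧ k ∉ s then h j k else 0) =
      ∑ j ∈ s, ∑' k, if k ∈ s then 0 else h j k := by
  rw [tsum_eq_sum (s := s) fun j hj => by simp [hj]]
  refine Finset.sum_congr rfl fun j hj => tsum_congr fun k => ?_
  by_cases hk : k ∈ s <;> simp [hj, hk]

variable [CompleteSpace E]

theorem IsStarProjection.apply_hilbertBasis {p : E →L[𝕜] E} (hp : IsStarProjection p)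
    (b : HilbertBasis ι 𝕜 E) {s : Finset ι}
    (hrange : LinearMap.range (p : E →ₗ[𝕜] E) = Submodule.span 𝕜 (b '' s)) (j : ι) :
    p (b j) = if j ∈ s then b j else 0 := by
  obtain ⟨_, hp_eq⟩ := isStarProjection_iff_eq_starProjection_range.mp hp
  rw [hp_eq]
  split_ifs with hj
  · rw [Submodule.starProjection_eq_self_iff, hrange]
    exact Submodule.subset_span ⟨j, hj, rfl⟩
  · rw [Submodule.starProjection_apply_eq_zero_iff, hrange]
    refine Submodule.isOrtho_span.mpr ?_ (Submodule.mem_span_singleton_self (b j))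
    rintro _ rfl _ ⟨i, hi, rfl⟩
    exact b.orthonormal.2 (ne_of_mem_of_not_mem (Finset.mem_coe.mp hi) hj).symm

theorem IsStarProjection.sub_isPositive_of_range_le {p q : E →L[𝕜] E} (hp : IsStarProjection p)
    (hq : IsStarProjection q)
    (h : LinearMap.range (p : E →ₗ[𝕜] E) ≤ LinearMap.range (q : E →ₗ[𝕜] E)) :
    (q - p).IsPositive :=
  (LinearMap.IsSymmetricProjection.le_iff_range_le_range
    (ContinuousLinearMap.isStarProjection_iff_isSymmetricProjection.mp hp)
    (ContinuousLinearMap.isStarProjection_iff_isSymmetricProjection.mp hq)).mpr h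

theorem enorm_inner_commutator_sq (b : HilbertBasis ι 𝕜 E) (s : Finset ι) {p : E →L[𝕜] E}
    (hp : IsSelfAdjoint p) (hpb : ∀ j, p (b j) = if j ∈ s then b j else 0) (A : E →L[𝕜] E)
    (j k : ι) :
    ‖⟪b k, (A * p - p * A) (b j)⟫_𝕜‖ₑ ^ 2 =
      (if j ∈ s ∧ k ∉ s then ‖⟪b k, A (b j)⟫_𝕜‖ₑ ^ 2 else 0) +
        (if k ∈ s ∧ j ∉ s then ‖⟪b k, A (b j)⟫_𝕜‖ₑ ^ 2 else 0) := by
  have hpA : ⟪b k, p (A (b j))⟫_𝕜 = ⟪p (b k), A (b j)⟫_𝕜 := by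
    rw [← ContinuousLinearMap.adjoint_inner_left, ← ContinuousLinearMap.star_eq_adjoint, hp.star_eq]
  have hC : (A * p - p * A) (b j) = A (p (b j)) - p (A (b j)) := rfl
  rw [hC, inner_sub_right, hpA, hpb, hpb]
  by_cases hj : j ∈ s <;> by_cases hk : k ∈ s <;> simp [hj, hk]

theorem tsum_enorm_commutator_sq (b : HilbertBasis ι 𝕜 E) (s : Finset ι) {p : E →L[𝕜] E}
    (hp : IsSelfAdjoint p) (hpb : ∀ j, p (b j) = if j ∈ s then b j else 0) (A : E →L[𝕜] E) :
    ∑' j, ‖(A * p - p * A) (b j)‖ₑ ^ 2 =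
      ∑ j ∈ s, ∑' k, (if k ∈ s then 0 else ‖⟪b k, A (b j)⟫_𝕜‖ₑ ^ 2) +
        ∑ k ∈ s, ∑' j, (if j ∈ s then 0 else ‖⟪b k, A (b j)⟫_𝕜‖ₑ ^ 2) := by
  simp_rw [← b.tsum_enorm_inner_sq, enorm_inner_commutator_sq b s hp hpb, ENNReal.tsum_add]
  rw [tsum_ite_and_eq_sum, ENNReal.tsum_comm (f := fun j k => ite (k ∈ s ∧ j ∉ s) _ _),
    tsum_ite_and_eq_sum]

end CoordinateProjection

theorem hsNorm_eq_sqrt_tsum {ι : Type*} (b : HilbertBasis ι ℂ H) (T : H →L[ℂ] H) :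
    hsNorm T = √((∑' i, ‖T (b i)‖ₑ ^ 2).toReal) := by
  obtain ⟨b₀, hb₀⟩ := (exists_hilbertBasis ℂ H).choose_spec
  rw [hsNorm, ← b₀.tsum_enorm_apply_sq_eq b, ENNReal.tsum_toReal_eq (fun _ => by simp)]
  congr 1
  simp [hb₀]

theorem hsNorm_eq_sqrt_card {ι : Type*} [DecidableEq ι] (b : HilbertBasis ι ℂ H) (s : Finset ι)
    {p : H →L[ℂ] H} (hpb : ∀ j, p (b j) = if j ∈ s then b j else 0) :
    hsNorm p = √(#s : ℝ) := by
  have h : ∀ j, ‖p (b j)‖ₑ ^ 2 = if j ∈ s then 1 else 0 := fun j => by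
    rw [hpb]; split_ifs <;> simp [← ofReal_norm, b.orthonormal.1 j]
  rw [hsNorm_eq_sqrt_tsum b, tsum_congr h, tsum_eq_sum (s := s) fun j hj => if_neg hj,
    Finset.sum_congr rfl fun j hj => if_pos hj]
  simp

section Translation

variable {α G : Type*} [AddCommGroup G] [DecidableEq α] [DecidableEq G] {ι : α → G}
  (hι : Function.Injective ι) {s : Finset α} {t : Finset G} (hst : ∀ k, ι k ∈ t ↔ k ∈ s)
include hι hst

theorem tsum_ite_sub_le (f : G → ℝ≥0∞) (j : α) :
    ∑' k, (if k ∈ s then 0 else f (ι k - ι j)) ≤ ∑' m, if ι j + m ∈ t then 0 else f m := by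
  set g : G → ℝ≥0∞ := fun x => if x ∈ t then 0 else f (x - ι j)
  calc ∑' k, (if k ∈ s then 0 else f (ι k - ι j))
      = ∑' k, g (ι k) := by simp only [g, hst]
    _ ≤ ∑' x, g x := ENNReal.tsum_comp_le_tsum_of_injective hι g
    _ = ∑' m, g (ι j + m) := ((Equiv.addLeft (ι j)).tsum_eq g).symm
    _ = ∑' m, if ι j + m ∈ t then 0 else f m := by simp only [g, add_sub_cancel_left]

theorem sum_tsum_ite_sub_le (f : G → ℝ≥0∞) :
    ∑ j ∈ s, ∑' k, (if k ∈ s then 0 else f (ι k - ι j)) ≤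
      ∑' m, #{j ∈ s | ι j + m ∉ t} * f m := by
  refine (Finset.sum_le_sum fun j _ => tsum_ite_sub_le hι hst f j).trans_eq ?_
  rw [← Summable.tsum_finsetSum fun _ _ => ENNReal.summable]
  refine tsum_congr fun m => ?_
  rw [Finset.sum_ite, Finset.sum_const_zero, zero_add, Finset.sum_const, nsmul_eq_mul]

theorem sum_tsum_ite_sub_le' (f : G → ℝ≥0∞) :
    ∑ k ∈ s, ∑' j, (if j ∈ s then 0 else f (ι k - ι j)) ≤
      ∑' m, #{j ∈ s | ι j - m ∉ t} * f m := by
  have h := sum_tsum_ite_sub_le hι hst (f ∘ Neg.neg)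
  simp only [Function.comp_apply, neg_sub] at h
  refine h.trans_eq ?_
  rw [← (Equiv.neg G).tsum_eq]
  simp only [Equiv.neg_apply, neg_neg, ← sub_eq_add_neg]

end Translation

def square (N : ℕ) : Finset (ℕ × ℕ) := Finset.range (N + 1) ×ˢ Finset.range (N + 1)

def box (N : ℕ) : Finset (ℤ × ℤ) := Finset.Icc 0 (N : ℤ) ×ˢ Finset.Icc 0 (N : ℤ)

theorem mem_square {N : ℕ} {j : ℕ × ℕ} : j ∈ square N ↔ j.1 ≤ N ∧ j.2 ≤ N := by
  simp [square]

theorem card_square (N : ℕ) : #(square N) = (N + 1) ^ 2 := by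
  simp [square, sq]

theorem coe_square (N : ℕ) : (square N : Set (ℕ × ℕ)) = {j | j.1 ≤ N ∧ j.2 ≤ N} :=
  Set.ext fun _ => mem_square

theorem square_mono : Monotone square :=
  fun _ _ h _ hj => mem_square.mpr ⟨(mem_square.mp hj).1.trans h, (mem_square.mp hj).2.trans h⟩

theorem tendsto_square : Tendsto square atTop atTop :=
  tendsto_atTop_finset_of_monotone square_mono
    fun j => ⟨max j.1 j.2, mem_square.mpr ⟨le_max_left _ _, le_max_right _ _⟩⟩

theorem prodMap_cast_mem_box {N : ℕ} {k : ℕ × ℕ} :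
    Prod.map ((↑) : ℕ → ℤ) ((↑) : ℕ → ℤ) k ∈ box N ↔ k ∈ square N := by
  simp [box, mem_square]

theorem card_filter_add_notMem_Icc_le (N : ℕ) (t : ℤ) :
    #((Finset.range (N + 1)).filter (fun i : ℕ => (i : ℤ) + t ∉ Finset.Icc 0 (N : ℤ))) ≤
      t.natAbs := by
  have hsub : (Finset.range (N + 1)).filter (fun i : ℕ => (i : ℤ) + t ∉ Finset.Icc 0 (N : ℤ)) ⊆
      Finset.Ico (N + 1 - t.toNat) (N + 1) ∪ Finset.range (-t).toNat := by
    intro i hi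
    simp only [Finset.mem_filter, Finset.mem_range, Finset.mem_Icc, Finset.mem_union,
      Finset.mem_Ico] at hi ⊢
    omega
  calc _ ≤ #(Finset.Ico (N + 1 - t.toNat) (N + 1)) + #(Finset.range (-t).toNat) :=
        (Finset.card_le_card hsub).trans (Finset.card_union_le _ _)
    _ ≤ t.natAbs := by rw [Nat.card_Ico, Finset.card_range]; omega

def escapeCount (N : ℕ) (m : ℤ × ℤ) : ℕ :=
  #{j ∈ square N | Prod.map ((↑) : ℕ → ℤ) ((↑) : ℕ → ℤ) j + m ∉ box N}

theorem escapeCount_le_sq (N : ℕ) (m : ℤ × ℤ) : escapeCount N m ≤ (N + 1) ^ 2 :=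
  (Finset.card_filter_le _ _).trans (card_square N).le

theorem escapeCount_le (N : ℕ) (m : ℤ × ℤ) :
    escapeCount N m ≤ (N + 1) * (m.1.natAbs + m.2.natAbs) := by
  set B₁ := (Finset.range (N + 1)).filter (fun i : ℕ => (i : ℤ) + m.1 ∉ Finset.Icc 0 (N : ℤ))
  set B₂ := (Finset.range (N + 1)).filter (fun i : ℕ => (i : ℤ) + m.2 ∉ Finset.Icc 0 (N : ℤ))
  have hsub : {j ∈ square N | Prod.map ((↑) : ℕ → ℤ) ((↑) : ℕ → ℤ) j + m ∉ box N} ⊆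
      B₁ ×ˢ Finset.range (N + 1) ∪ Finset.range (N + 1) ×ˢ B₂ := by
    intro j hj
    simp only [square, box, B₁, B₂, Finset.mem_filter, Finset.mem_product, Finset.mem_union,
      Prod.fst_add, Prod.snd_add, Prod.map_fst, Prod.map_snd] at hj ⊢
    tauto
  calc escapeCount N m ≤ #B₁ * (N + 1) + (N + 1) * #B₂ := by
        refine (Finset.card_le_card hsub).trans ((Finset.card_union_le _ _).trans_eq ?_)
        rw [Finset.card_product, Finset.card_product, Finset.card_range]
    _ ≤ m.1.natAbs * (N + 1) + (N + 1) * m.2.natAbs := by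
        gcongr
        · exact card_filter_add_notMem_Icc_le N m.1
        · exact card_filter_add_notMem_Icc_le N m.2
    _ = (N + 1) * (m.1.natAbs + m.2.natAbs) := by ring

def escapeRatio (N : ℕ) (m : ℤ × ℤ) : ℝ :=
  ((escapeCount N m + escapeCount N (-m) : ℕ) : ℝ) / ((N : ℝ) + 1) ^ 2

theorem escapeRatio_nonneg (N : ℕ) (m : ℤ × ℤ) : 0 ≤ escapeRatio N m := by
  unfold escapeRatio; positivity

theorem escapeRatio_le_two (N : ℕ) (m : ℤ × ℤ) : escapeRatio N m ≤ 2 := by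
  have h := add_le_add (escapeCount_le_sq N m) (escapeCount_le_sq N (-m))
  rw [escapeRatio, div_le_iff₀ (by positivity)]
  exact_mod_cast h.trans_eq (two_mul _).symm

theorem tendsto_escapeRatio (m : ℤ × ℤ) :
    Tendsto (fun N => escapeRatio N m) atTop (𝓝 0) := by
  set K : ℕ := m.1.natAbs + m.2.natAbs
  have hle : ∀ N : ℕ, escapeRatio N m ≤ 2 * K * (1 / ((N : ℝ) + 1)) := fun N => by
    have h := add_le_add (escapeCount_le N m) (escapeCount_le N (-m))
    simp only [Prod.fst_neg, Prod.snd_neg, Int.natAbs_neg] at h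
    rw [escapeRatio, div_le_iff₀ (by positivity)]
    calc ((escapeCount N m + escapeCount N (-m) : ℕ) : ℝ) ≤ 2 * ((N : ℝ) + 1) * K := by
          exact_mod_cast h.trans_eq (by ring)
      _ = 2 * K * (1 / ((N : ℝ) + 1)) * ((N : ℝ) + 1) ^ 2 := by field_simp
  refine squeeze_zero (escapeRatio_nonneg · m) hle ?_
  simpa using tendsto_one_div_add_atTop_nhds_zero_nat.const_mul (2 * (K : ℝ))

theorem tendsto_tsum_escapeRatio_mul {a : ℤ × ℤ → ℂ} (ha : Summable fun m => ‖a m‖ ^ 2) :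
    Tendsto (fun N => ∑' m, escapeRatio N m * ‖a m‖ ^ 2) atTop (𝓝 0) := by
  have h := tendsto_tsum_of_dominated_convergence (ha.mul_left 2)
    (fun m => by simpa using (tendsto_escapeRatio m).mul_const (‖a m‖ ^ 2))
    (Eventually.of_forall fun N m => by
      rw [Real.norm_of_nonneg (by have := escapeRatio_nonneg N m; positivity)]
      exact mul_le_mul_of_nonneg_right (escapeRatio_le_two N m) (by positivity))
  simpa using h

theorem coe_default_hilbertBasis :
    ⇑(default : HilbertBasis (ℕ × ℕ) ℂ ℓ²(ℕ × ℕ, ℂ)) = eVec2 := by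
  funext j
  exact ((default : HilbertBasis (ℕ × ℕ) ℂ ℓ²(ℕ × ℕ, ℂ)).repr_symm_single j).symm

section Toeplitz

variable {a : ℤ × ℤ → ℂ} {A : ℓ²(ℕ × ℕ, ℂ) →L[ℂ] ℓ²(ℕ × ℕ, ℂ)}
  (hA : ∀ j k : ℕ × ℕ,
      ⟪eVec2 k, A (eVec2 j)⟫_ℂ = a ((k.1 : ℤ) - (j.1 : ℤ), (k.2 : ℤ) - (j.2 : ℤ)))
  {p : ℓ²(ℕ × ℕ, ℂ) →L[ℂ] ℓ²(ℕ × ℕ, ℂ)}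
include hA

theorem tsum_enorm_commutator_sq_le (hp : IsSelfAdjoint p) (N : ℕ)
    (hpb : ∀ j, p (eVec2 j) = if j ∈ square N then eVec2 j else 0) :
    ∑' j, ‖(A * p - p * A) (eVec2 j)‖ₑ ^ 2 ≤
      ∑' m, ((escapeCount N m + escapeCount N (-m) : ℕ) : ℝ≥0∞) * ‖a m‖ₑ ^ 2 := by
  have hι : Function.Injective (Prod.map ((↑) : ℕ → ℤ) ((↑) : ℕ → ℤ)) :=
    Nat.cast_injective.prodMap Nat.cast_injective
  have h := tsum_enorm_commutator_sq (default : HilbertBasis (ℕ × ℕ) ℂ _) (square N) hp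
    (by rwa [coe_default_hilbertBasis]) A
  simp only [coe_default_hilbertBasis, hA] at h
  rw [h]
  refine (add_le_add (sum_tsum_ite_sub_le hι (fun _ => prodMap_cast_mem_box)
    fun m => ‖a m‖ₑ ^ 2) (sum_tsum_ite_sub_le' hι (fun _ => prodMap_cast_mem_box)
    fun m => ‖a m‖ₑ ^ 2)).trans_eq ?_
  rw [← ENNReal.tsum_add]
  refine tsum_congr fun m => ?_
  simp only [escapeCount, sub_eq_add_neg, Nat.cast_add, add_mul]

theorem hsNorm_commutator_le (ha : Summable fun m => ‖a m‖ ^ 2) (hp : IsSelfAdjoint p) (N : ℕ)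
    (hpb : ∀ j, p (eVec2 j) = if j ∈ square N then eVec2 j else 0) :
    hsNorm (A * p - p * A) ≤ ((N : ℝ) + 1) * √(∑' m, escapeRatio N m * ‖a m‖ ^ 2) := by
  set S := ∑' m, escapeRatio N m * ‖a m‖ ^ 2
  have hS_nonneg : ∀ m, 0 ≤ escapeRatio N m * ‖a m‖ ^ 2 :=
    fun m => mul_nonneg (escapeRatio_nonneg N m) (by positivity)
  have hS : Summable fun m => escapeRatio N m * ‖a m‖ ^ 2 :=
    (ha.mul_left 2).of_nonneg_of_le hS_nonneg
      fun m => mul_le_mul_of_nonneg_right (escapeRatio_le_two N m) (by positivity)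
  have hweight : ∀ m, ((escapeCount N m + escapeCount N (-m) : ℕ) : ℝ≥0∞) * ‖a m‖ₑ ^ 2 =
      ENNReal.ofReal (((N : ℝ) + 1) ^ 2 * (escapeRatio N m * ‖a m‖ ^ 2)) := fun m => by
    have hN : ((N : ℝ) + 1) ^ 2 ≠ 0 := by positivity
    rw [escapeRatio, ← mul_assoc, mul_div_cancel₀ _ hN, ENNReal.ofReal_mul (by positivity),
      ENNReal.ofReal_natCast, ENNReal.ofReal_pow (norm_nonneg _), ofReal_norm]
  have hE : (∑' j, ‖(A * p - p * A) (eVec2 j)‖ₑ ^ 2).toReal ≤ ((N : ℝ) + 1) ^ 2 * S := by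
    refine ENNReal.toReal_le_of_le_ofReal
      (mul_nonneg (by positivity) (tsum_nonneg fun m => hS_nonneg m)) ?_
    refine (tsum_enorm_commutator_sq_le hA hp N hpb).trans_eq ?_
    rw [tsum_congr hweight, ← ENNReal.ofReal_tsum_of_nonneg _ (hS.mul_left _), tsum_mul_left]
    exact fun m => mul_nonneg (by positivity) (hS_nonneg m)
  rw [hsNorm_eq_sqrt_tsum (default : HilbertBasis (ℕ × ℕ) ℂ _), coe_default_hilbertBasis]
  calc _ ≤ √(((N : ℝ) + 1) ^ 2 * S) := Real.sqrt_le_sqrt hE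
    _ = ((N : ℝ) + 1) * √S := by rw [Real.sqrt_mul (by positivity), Real.sqrt_sq (by positivity)]

theorem tendsto_phi_of_toeplitz (ha : Summable fun m => ‖a m‖ ^ 2)
    {P : ℕ → ℓ²(ℕ × ℕ, ℂ) →L[ℂ] ℓ²(ℕ × ℕ, ℂ)} (hP : ∀ N, IsSelfAdjoint (P N))
    (hPe : ∀ N j, P N (eVec2 j) = if j ∈ square N then eVec2 j else 0) :
    Tendsto (fun N => phi A (P N)) atTop (𝓝 0) := by
  have hφ : ∀ N, phi A (P N) ≤ √(∑' m, escapeRatio N m * ‖a m‖ ^ 2) := fun N => by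
    rw [phi, hsNorm_eq_sqrt_card (default : HilbertBasis (ℕ × ℕ) ℂ _) (square N) (p := P N)
      (by rw [coe_default_hilbertBasis]; exact hPe N), card_square, Nat.cast_pow, Nat.cast_succ,
      Real.sqrt_sq (by positivity), div_le_iff₀ (by positivity), mul_comm]
    exact hsNorm_commutator_le hA ha (hP N) N (hPe N)
  refine squeeze_zero (fun N => div_nonneg (Real.sqrt_nonneg _) (Real.sqrt_nonneg _)) hφ ?_
  simpa using (tendsto_tsum_escapeRatio_mul ha).sqrt

end Toeplitz

/-- If `A` is a bounded operator on `ℓ²(ℕ × ℕ)` whose matrix entries are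
`⟨A e_j, e_k⟩ = a(k - j)` for a square-summable `a : ℤ × ℤ → ℂ`, then the projections
onto `span{e_j : j ∈ {0,…,N} × {0,…,N}}` form a proper Følner sequence for `A`. -/
theorem statement_18 (a : ℤ × ℤ → ℂ) (ha : Summable fun k : ℤ × ℤ => ‖a k‖ ^ 2)
    (A : lp (fun _ : ℕ × ℕ => ℂ) 2 →L[ℂ] lp (fun _ : ℕ × ℕ => ℂ) 2)
    (hA : ∀ j k : ℕ × ℕ,
      (inner ℂ (eVec2 k) (A (eVec2 j)) : ℂ)
        = a ((k.1 : ℤ) - (j.1 : ℤ), (k.2 : ℤ) - (j.2 : ℤ)))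
    (P : ℕ → lp (fun _ : ℕ × ℕ => ℂ) 2 →L[ℂ] lp (fun _ : ℕ × ℕ => ℂ) 2)
    (hproj : ∀ N, IsOrthProjection (P N))
    (hrange : ∀ N, LinearMap.range (P N : lp (fun _ : ℕ × ℕ => ℂ) 2 →ₗ[ℂ] lp (fun _ : ℕ × ℕ => ℂ) 2)
        = Submodule.span ℂ (eVec2 '' {j : ℕ × ℕ | j.1 ≤ N ∧ j.2 ≤ N})) :
    Tendsto (fun N => phi A (P N)) atTop (nhds 0) ∧ IsProperFolnerSeq A P := by
  set b : HilbertBasis (ℕ × ℕ) ℂ ℓ²(ℕ × ℕ, ℂ) := default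
  have hP : ∀ N, IsStarProjection (P N) := fun N => ⟨(hproj N).1, (hproj N).2⟩
  have hrange' : ∀ N, LinearMap.range (P N : ℓ²(ℕ × ℕ, ℂ) →ₗ[ℂ] ℓ²(ℕ × ℕ, ℂ)) =
      Submodule.span ℂ (b '' square N) := fun N => by
    rw [hrange, coe_default_hilbertBasis, coe_square]
  have hPb : ∀ N j, P N (b j) = if j ∈ square N then b j else 0 :=
    fun N => (hP N).apply_hilbertBasis b (hrange' N)
  have hPe : ∀ N j, P N (eVec2 j) = if j ∈ square N then eVec2 j else 0 := by
    simpa only [b, coe_default_hilbertBasis] using hPb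
  have hφ := tendsto_phi_of_toeplitz hA ha (fun N => (hproj N).2) hPe
  refine ⟨hφ, fun N => ⟨hproj N, fun h => ?_, ?_⟩, fun N => ?_,
    b.tendsto_apply_of_apply_eq_ite tendsto_square hPb, hφ⟩
  · have h0 := hPb N (0, 0)
    rw [h, if_pos (mem_square.mpr ⟨N.zero_le, N.zero_le⟩)] at h0
    exact b.orthonormal.ne_zero (0, 0) h0.symm
  · rw [hrange' N]
    exact FiniteDimensional.span_of_finite ℂ ((square N).finite_toSet.image _)
  · refine (hP N).sub_isPositive_of_range_le (hP (N + 1)) ?_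
    rw [hrange', hrange']
    exact Submodule.span_mono (Set.image_mono (Finset.coe_subset.mpr (square_mono N.le_succ)))
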